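/- (Product of two FOQCS-LCU block encodings.) Let A = Σ_{i,j} α_{ij} P(i,j) and B = Σ_{p,q} β_{pq} P(p,q) be n-qubit operators in the Z–X Pauli basis, with normalizations λ_A = Σ|α_{ij}| and λ_B = Σ|β_{pq}|. Define on ancilla registers of 2n + 2n qubits the right state |R⟩ = (λ_A λ_B)^{-1/2} Σ e^{i(arg α_{ij} + arg β_{pq})} √(|α_{ij}||β_{pq}|) |i⟩|j⟩|p⟩|q⟩ and left state |L⟩ = (λ_A λ_B)^{-1/2} Σ √(|α_{ij}||β_{pq}|) |i⟩|j⟩|p⟩|q⟩, and let W be the unitary acting by W(|i⟩|j⟩|p⟩|q⟩ ⊗ |φ⟩) = |i⟩|j⟩|p⟩|q⟩ ⊗ (⊗_ℓ Z^{q_ℓ} X^{p_ℓ} Z^{j_ℓ} X^{i_ℓ}) |φ⟩. Then (⟨L| ⊗ I) W (|R⟩ ⊗ I) φ = (λ_A λ_B)^{-1} (B A) φ for all n-qubit vectors φ. -/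

import Mathlib

open Matrix

noncomputable section

/-- Pauli `X`. -/
def X : Matrix (Fin 2) (Fin 2) ℂ := !![0, 1; 1, 0]

/-- Pauli `Z`. -/
def Z : Matrix (Fin 2) (Fin 2) ℂ := !![1, 0; 0, -1]

/-- The `n`-qubit operator `P(i,j) = ⊗_{ℓ=0}^{n-1} Z^{j_ℓ} X^{i_ℓ}`. -/
def P (n : ℕ) (i j : Fin n → Fin 2) :
    Matrix (Fin n → Fin 2) (Fin n → Fin 2) ℂ :=
  fun x y => ∏ ℓ, (Z ^ (j ℓ : ℕ) * X ^ (i ℓ : ℕ)) (x ℓ) (y ℓ)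

/-- The `n`-qubit operator `⊗_{ℓ=0}^{n-1} Z^{q_ℓ} X^{p_ℓ} Z^{j_ℓ} X^{i_ℓ}`. -/
def Q (n : ℕ) (i j p q : Fin n → Fin 2) :
    Matrix (Fin n → Fin 2) (Fin n → Fin 2) ℂ :=
  fun x y =>
    ∏ ℓ, (Z ^ (q ℓ : ℕ) * X ^ (p ℓ : ℕ) * Z ^ (j ℓ : ℕ) * X ^ (i ℓ : ℕ)) (x ℓ) (y ℓ)

/-- Ancilla index for the product of two block encodings: `((i,j),(p,q))`. -/
abbrev Anc2 (n : ℕ) :=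
  ((Fin n → Fin 2) × (Fin n → Fin 2)) × ((Fin n → Fin 2) × (Fin n → Fin 2))

/-! The phases of `|R⟩` cancel against the conjugated real amplitudes of `⟨L|`, so the branch
`|i⟩|j⟩|p⟩|q⟩` carries the weight `α_{ij} β_{pq} / (λ_A λ_B)`; on that branch `W` applies
`Q(i,j,p,q) = P(p,q) P(i,j)`, and summing over the branches expands the product `B A`. -/

def piKron {ι m R : Type*} [Fintype ι] [CommMonoid R] (M : ι → Matrix m m R) :
    Matrix (ι → m) (ι → m) R :=
  of fun x y => ∏ ℓ, M ℓ (x ℓ) (y ℓ)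

theorem piKron_mul {ι m R : Type*} [Fintype ι] [DecidableEq ι] [Fintype m] [CommSemiring R]
    (M N : ι → Matrix m m R) :
    piKron (fun ℓ => M ℓ * N ℓ) = piKron M * piKron N := by
  ext x y
  simp only [piKron, of_apply, mul_apply, Finset.prod_univ_sum, Fintype.piFinset_univ,
    Finset.prod_mul_distrib]

theorem Q_eq_P_mul_P (n : ℕ) (i j p q : Fin n → Fin 2) :
    Q n i j p q = P n p q * P n i j := by
  have hQ : Q n i j p q =
      piKron (fun ℓ => (Z ^ (q ℓ : ℕ) * X ^ (p ℓ : ℕ)) * (Z ^ (j ℓ : ℕ) * X ^ (i ℓ : ℕ))) := by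
    ext x y
    simp only [Q, piKron, of_apply, ← Matrix.mul_assoc]
  rw [hQ, piKron_mul]
  rfl

section Controlled

variable {ι m R : Type*} [Fintype ι] [DecidableEq ι] [Fintype m] [CommSemiring R]
  (U : ι → Matrix m m R) (W : Matrix (ι × m) (ι × m) R)

theorem controlled_mulVec_apply (hW : ∀ x y, W x y = if x.1 = y.1 then U y.1 x.2 y.2 else 0)
    (r : ι → R) (φ : m → R) (a : ι) (x : m) :
    W.mulVec (fun p => r p.1 * φ p.2) (a, x) = r a * (U a).mulVec φ x := by
  simp only [mulVec, dotProduct, hW, Fintype.sum_prod_type, ite_mul, zero_mul,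
    Finset.sum_ite_irrel, Finset.sum_const_zero, Finset.sum_ite_eq, Finset.mem_univ, if_true,
    Finset.mul_sum]
  exact Finset.sum_congr rfl fun _ _ => mul_left_comm _ _ _

theorem sum_mul_controlled_mulVec (hW : ∀ x y, W x y = if x.1 = y.1 then U y.1 x.2 y.2 else 0)
    (l r : ι → R) (φ : m → R) :
    (fun x => ∑ a, l a * W.mulVec (fun p => r p.1 * φ p.2) (a, x))
      = (∑ a, (l a * r a) • U a).mulVec φ := by
  ext x
  simp only [controlled_mulVec_apply U W hW, ← mul_assoc, Matrix.sum_mulVec, smul_mulVec,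
    Finset.sum_apply, Pi.smul_apply, smul_eq_mul]

end Controlled

theorem exp_arg_add_arg_mul_norm_mul_norm (c d : ℂ) :
    Complex.exp (Complex.I * (c.arg + d.arg)) * ((‖c‖ * ‖d‖ : ℝ) : ℂ) = c * d := by
  rw [mul_add, Complex.exp_add]
  push_cast
  calc _ = (‖c‖ * Complex.exp (c.arg * Complex.I)) * (‖d‖ * Complex.exp (d.arg * Complex.I)) := by
        simp only [mul_comm Complex.I]; ring
    _ = c * d := by rw [Complex.norm_mul_exp_arg_mul_I, Complex.norm_mul_exp_arg_mul_I]

theorem ofReal_sqrt_mul_self {t : ℝ} (ht : 0 ≤ t) : (√t : ℂ) * (√t : ℂ) = t := by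
  exact_mod_cast Real.mul_self_sqrt ht

theorem conj_left_mul_right_amplitude {s : ℝ} (hs : 0 ≤ s) (c d : ℂ) :
    starRingEnd ℂ ((√s : ℂ)⁻¹ * (√(‖c‖ * ‖d‖) : ℂ)) *
        ((√s : ℂ)⁻¹ * Complex.exp (Complex.I * (c.arg + d.arg)) * (√(‖c‖ * ‖d‖) : ℂ))
      = (s : ℂ)⁻¹ * (c * d) := by
  simp only [map_mul, map_inv₀, Complex.conj_ofReal]
  calc _ = ((√s : ℂ) * √s)⁻¹ *
        (Complex.exp (Complex.I * (c.arg + d.arg)) * ((√(‖c‖ * ‖d‖) : ℂ) * √(‖c‖ * ‖d‖))) := by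
        ring
    _ = _ := by
      rw [ofReal_sqrt_mul_self hs, ofReal_sqrt_mul_self (by positivity),
        exp_arg_add_arg_mul_norm_mul_norm]

theorem sum_sum_smul_mul_sum_sum_smul {κ R A : Type*} [Fintype κ] [CommSemiring R] [Semiring A]
    [Algebra R A] (α β : κ → κ → R) (M : κ → κ → A) :
    (∑ p, ∑ q, β p q • M p q) * (∑ i, ∑ j, α i j • M i j)
      = ∑ a : (κ × κ) × (κ × κ),
          (α a.1.1 a.1.2 * β a.2.1 a.2.2) • (M a.2.1 a.2.2 * M a.1.1 a.1.2) := by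
  rw [← Fintype.sum_prod_type', ← Fintype.sum_prod_type', Fintype.sum_mul_sum, Finset.sum_comm,
    ← Fintype.sum_prod_type']
  simp_rw [smul_mul_smul_comm, mul_comm (β _ _)]

theorem stmt10 (n : ℕ)
    (α β : (Fin n → Fin 2) → (Fin n → Fin 2) → ℂ)
    (lamA lamB : ℝ)
    (hA : lamA = ∑ i, ∑ j, ‖α i j‖)
    (hB : lamB = ∑ p, ∑ q, ‖β p q‖)
    (Rv Lv : Anc2 n → ℂ)
    (hR : Rv = fun a => (Real.sqrt (lamA * lamB) : ℂ)⁻¹ *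
      Complex.exp (Complex.I * ((α a.1.1 a.1.2).arg + (β a.2.1 a.2.2).arg)) *
      (Real.sqrt (‖α a.1.1 a.1.2‖ * ‖β a.2.1 a.2.2‖) : ℂ))
    (hL : Lv = fun a => (Real.sqrt (lamA * lamB) : ℂ)⁻¹ *
      (Real.sqrt (‖α a.1.1 a.1.2‖ * ‖β a.2.1 a.2.2‖) : ℂ))
    (W : Matrix (Anc2 n × (Fin n → Fin 2)) (Anc2 n × (Fin n → Fin 2)) ℂ)
    (hW : W = fun x y => if x.1 = y.1 then
      Q n y.1.1.1 y.1.1.2 y.1.2.1 y.1.2.2 x.2 y.2 else 0)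
    (φ : (Fin n → Fin 2) → ℂ) :
    (fun x => ∑ a : Anc2 n, (starRingEnd ℂ) (Lv a) *
        W.mulVec (fun p => Rv p.1 * φ p.2) (a, x))
    = ((lamA * lamB : ℝ) : ℂ)⁻¹ •
        ((∑ p, ∑ q, β p q • P n p q) * (∑ i, ∑ j, α i j • P n i j)).mulVec φ := by
  have hlam : 0 ≤ lamA * lamB := by rw [hA, hB]; positivity
  rw [sum_mul_controlled_mulVec (fun a => Q n a.1.1 a.1.2 a.2.1 a.2.2) W (fun x y => by rw [hW]),
    sum_sum_smul_mul_sum_sum_smul, ← smul_mulVec, Finset.smul_sum]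
  refine congrArg (· *ᵥ φ) (Finset.sum_congr rfl fun a _ => ?_)
  simp only [hR, hL]
  rw [conj_left_mul_right_amplitude hlam, smul_smul, Q_eq_P_mul_P]
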